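/- arXiv:math/0311019 — 7 statements merged into one kernel-verified Lean document; each statement's English description precedes it below -/
import Mathlib

section
/- Let A ⊂ M^{n+1} be a closed future-complete convex set admitting a spacelike support hyperplane. Then for every interior point p of A there exists a unique point r(p) ∈ ∂A which maximizes the Lorentzian distance d(p,q) = √(-⟨p-q, p-q⟩) among all q ∈ Ā lying in the causal past of p. -/
/-- The Minkowski bilinear form on `ℝ^{n+1}`. -/
noncomputable def mink {n : ℕ} (v w : Fin (n+1) → ℝ) : ℝ :=
  (∑ i, v i * w i) - 2 * v 0 * w 0

/-- A future-directed timelike vector. -/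
def TimelikeFuture {n : ℕ} (v : Fin (n+1) → ℝ) : Prop :=
  mink v v < 0 ∧ 0 < v 0

/-- `q` lies in the causal past of `p`. -/
def InCausalPast {n : ℕ} (q p : Fin (n+1) → ℝ) : Prop :=
  mink (q - p) (q - p) ≤ 0 ∧ (q - p) 0 ≤ 0

section Helpers

open Finset

lemma mink_split {n : ℕ} (v w : Fin (n+1) → ℝ) :
    mink v w = (∑ i ∈ Finset.univ.erase 0, v i * w i) - v 0 * w 0 := by
  unfold mink
  rw [← Finset.add_sum_erase Finset.univ (fun i => v i * w i) (Finset.mem_univ 0)]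
  ring

lemma mink_neg_neg {n : ℕ} (v w : Fin (n+1) → ℝ) : mink (-v) (-w) = mink v w := by
  unfold mink
  simp only [Pi.neg_apply, neg_mul_neg]
  ring

lemma mink_sub_symm {n : ℕ} (a b : Fin (n+1) → ℝ) :
    mink (a - b) (a - b) = mink (b - a) (b - a) := by
  rw [show a - b = -(b - a) by ring, mink_neg_neg]

lemma mink_add_add {n : ℕ} (v w : Fin (n+1) → ℝ) :
    mink (v + w) (v + w) = mink v v + 2 * mink v w + mink w w := by
  unfold mink
  simp only [Pi.add_apply]
  rw [show (∑ i, (v i + w i) * (v i + w i))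
      = (∑ i, v i * v i) + 2 * (∑ i, v i * w i) + ∑ i, w i * w i by
    rw [Finset.mul_sum, ← Finset.sum_add_distrib, ← Finset.sum_add_distrib]
    exact Finset.sum_congr rfl fun i _ => by ring]
  ring

lemma mink_smul {n : ℕ} (t : ℝ) (v w : Fin (n+1) → ℝ) :
    mink (t • v) (t • w) = (t * t) * mink v w := by
  unfold mink
  simp only [Pi.smul_apply, smul_eq_mul, Finset.mul_sum]
  rw [show (∑ i, t * v i * (t * w i)) = ∑ i, t * t * (v i * w i) from
    Finset.sum_congr rfl fun i _ => by ring]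
  rw [← Finset.mul_sum]
  ring

lemma bump_mink_self {n : ℕ} (t : ℝ) :
    mink (n := n) (fun i => if i = 0 then t else 0) (fun i => if i = 0 then t else 0)
      = -(t * t) := by
  unfold mink
  rw [show (∑ i : Fin (n+1), (fun i => if i = 0 then t else 0 : Fin (n+1) → ℝ) i
        * (fun i => if i = 0 then t else 0 : Fin (n+1) → ℝ) i)
      = ∑ i : Fin (n+1), (if i = 0 then t * t else 0) from
    Finset.sum_congr rfl fun i _ => by by_cases h : i = 0 <;> simp [h]]
  rw [Finset.sum_ite_eq' Finset.univ (0 : Fin (n+1)) (fun _ => t * t)]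
  simp
  ring

lemma bump_mink_left {n : ℕ} (v : Fin (n+1) → ℝ) (t : ℝ) :
    mink v (fun i => if i = 0 then t else 0) = -(v 0 * t) := by
  unfold mink
  rw [show (∑ i : Fin (n+1), v i * (fun i => if i = 0 then t else 0 : Fin (n+1) → ℝ) i)
      = ∑ i : Fin (n+1), (if i = 0 then v i * t else 0) from
    Finset.sum_congr rfl fun i _ => by by_cases h : i = 0 <;> simp [h]]
  rw [Finset.sum_ite_eq' Finset.univ (0 : Fin (n+1)) (fun i => v i * t)]
  simp
  ring

lemma cs_abs {ι : Type*} (s : Finset ι) (f g : ι → ℝ) :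
    |∑ i ∈ s, f i * g i| ≤
      Real.sqrt (∑ i ∈ s, f i * f i) * Real.sqrt (∑ i ∈ s, g i * g i) := by
  rw [← Real.sqrt_mul (Finset.sum_nonneg fun i _ => mul_self_nonneg _)]
  apply Real.abs_le_sqrt
  calc (∑ i ∈ s, f i * g i) ^ 2 ≤ (∑ i ∈ s, f i ^ 2) * (∑ i ∈ s, g i ^ 2) :=
        Finset.sum_mul_sq_le_sq_mul_sq s f g
    _ = _ := by simp_rw [pow_two]

lemma lorentz_nonneg_t (v0 w0 a2 b2 d2 : ℝ) (hv0 : 0 ≤ v0) (hw0 : 0 ≤ w0)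
    (ha2 : 0 ≤ a2) (hb2 : 0 ≤ b2)
    (ha : v0 ^ 2 - a2 = d2) (hb : w0 ^ 2 - b2 = d2) (hd : 0 < d2) :
    0 ≤ v0 * w0 - d2 := by
  nlinarith [mul_nonneg hv0 hw0, sq_nonneg (v0 * w0 - d2), sq_nonneg (v0 - w0)]

lemma lorentz_rev (v0 w0 a2 b2 c d2 : ℝ) (hv0 : 0 ≤ v0) (hw0 : 0 ≤ w0)
    (ha2 : 0 ≤ a2) (hb2 : 0 ≤ b2) (hcs : c ^ 2 ≤ a2 * b2)
    (ha : v0 ^ 2 - a2 = d2) (hb : w0 ^ 2 - b2 = d2) (hd : 0 < d2) :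
    d2 ≤ v0 * w0 - c := by
  have ht := lorentz_nonneg_t v0 w0 a2 b2 d2 hv0 hw0 ha2 hb2 ha hb hd
  have h1 : a2 * b2 ≤ (v0 * w0 - d2) ^ 2 := by nlinarith [sq_nonneg (v0 - w0)]
  have h2 : c ^ 2 ≤ (v0 * w0 - d2) ^ 2 := le_trans hcs h1
  nlinarith [le_abs_self c, sq_abs c, abs_nonneg c]

lemma lorentz_eq (v0 w0 a2 b2 c d2 : ℝ) (hv0 : 0 ≤ v0) (hw0 : 0 ≤ w0)
    (ha2 : 0 ≤ a2) (hb2 : 0 ≤ b2) (hcs : c ^ 2 ≤ a2 * b2)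
    (ha : v0 ^ 2 - a2 = d2) (hb : w0 ^ 2 - b2 = d2) (hd : 0 < d2)
    (hub : v0 * w0 - c ≤ d2) :
    v0 = w0 ∧ a2 + b2 - 2 * c = 0 := by
  have h1 := lorentz_rev v0 w0 a2 b2 c d2 hv0 hw0 ha2 hb2 hcs ha hb hd
  have hc : c = v0 * w0 - d2 := by linarith
  have ha' : a2 = v0 ^ 2 - d2 := by linarith
  have hb' : b2 = w0 ^ 2 - d2 := by linarith
  have h3 : (v0 * w0 - d2) ^ 2 - a2 * b2 = d2 * (v0 - w0) ^ 2 := by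
    rw [ha', hb']; ring
  have h4 : d2 * (v0 - w0) ^ 2 ≤ 0 := by nlinarith
  have h5 : (v0 - w0) ^ 2 = 0 := by
    have := sq_nonneg (v0 - w0)
    nlinarith
  have hvw : v0 = w0 := by
    have := pow_eq_zero_iff (n := 2) (by norm_num) |>.mp h5
    linarith
  refine ⟨hvw, ?_⟩
  subst hvw
  nlinarith [hc, ha', hb']

end Helpers

/-- Let `A ⊂ M^{n+1}` be a closed future-complete convex set admitting a spacelike
support hyperplane.  Then for every interior point `p` of `A` there exists a unique point
`r(p) ∈ ∂A` which maximizes the Lorentzian distance `d(p,q) = √(-⟨p-q,p-q⟩)` among all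
`q ∈ A` lying in the causal past of `p`. -/
theorem exists_unique_lorentz_distance_maximizer {n : ℕ}
    (A : Set (Fin (n+1) → ℝ)) (hconv : Convex ℝ A) (hclosed : IsClosed A)
    (hfut : ∀ p ∈ A, ∀ v : Fin (n+1) → ℝ, TimelikeFuture v → p + v ∈ A)
    (hsupp : ∃ q u : Fin (n+1) → ℝ, TimelikeFuture u ∧ ∀ x ∈ A, mink (x - q) u ≤ 0)
    (p : Fin (n+1) → ℝ) (hp : p ∈ interior A) :
    ∃! r : Fin (n+1) → ℝ, r ∈ frontier A ∧ InCausalPast r p ∧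
      ∀ q ∈ A, InCausalPast q p →
        Real.sqrt (-(mink (p - q) (p - q))) ≤ Real.sqrt (-(mink (p - r) (p - r))) := by
  classical
  obtain ⟨q, u, hu, hqu⟩ := hsupp
  set S : Finset (Fin (n+1)) := Finset.univ.erase 0 with hSdef
  set g : (Fin (n+1) → ℝ) → ℝ := fun x => mink (x - p) (x - p) with hgdef
  set f : (Fin (n+1) → ℝ) → ℝ := fun x => -(mink (p - x) (p - x)) with hfdef
  have hfg : ∀ x, f x = -(g x) := fun x => by
    simp only [hfdef, hgdef, mink_sub_symm]
  set K : Set (Fin (n+1) → ℝ) := {x | x ∈ A ∧ InCausalPast x p} with hKdef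
  -- continuity
  have hgc : Continuous g := by
    have h1 : Continuous fun x : Fin (n+1) → ℝ => ∑ i, (x i - p i) * (x i - p i) :=
      continuous_finset_sum _ fun i _ =>
        ((continuous_apply i).sub continuous_const).mul
          ((continuous_apply i).sub continuous_const)
    have h2 : Continuous fun x : Fin (n+1) → ℝ =>
        2 * (x 0 - p 0) * (x 0 - p 0) :=
      ((continuous_const.mul ((continuous_apply 0).sub continuous_const)).mul
        ((continuous_apply 0).sub continuous_const))
    exact h1.sub h2
  have hfc : Continuous f := by
    have : f = fun x => -(g x) := funext hfg
    rw [this]; exact hgc.neg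
  -- K is closed
  have hKc : IsClosed K := by
    have : K = A ∩ ({x | g x ≤ 0} ∩ {x | x 0 - p 0 ≤ 0}) := by
      ext x
      simp only [hKdef, Set.mem_setOf_eq, Set.mem_inter_iff, InCausalPast, hgdef,
        Pi.sub_apply]
    rw [this]
    exact hclosed.inter ((isClosed_le hgc continuous_const).inter
      (isClosed_le ((continuous_apply 0).sub continuous_const) continuous_const))
  -- basic facts about K members
  have hKfacts : ∀ x ∈ K, x 0 ≤ p 0 ∧
      (∑ i ∈ S, (x i - p i) * (x i - p i)) ≤ (p 0 - x 0) ^ 2 := by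
    intro x hx
    obtain ⟨hxA, hxQ, hx0⟩ := hx
    rw [Pi.sub_apply] at hx0
    constructor
    · linarith
    · rw [mink_split] at hxQ
      simp only [Pi.sub_apply] at hxQ
      nlinarith [hxQ]
  -- spatial norm of u
  have hSU : (∑ i ∈ S, u i * u i) < u 0 * u 0 := by
    have := hu.1
    rw [mink_split] at this
    linarith
  set sU := Real.sqrt (∑ i ∈ S, u i * u i) with hsUdef
  have hsU0 : 0 ≤ sU := Real.sqrt_nonneg _
  have hsUsq : sU ^ 2 = ∑ i ∈ S, u i * u i :=
    Real.sq_sqrt (Finset.sum_nonneg fun i _ => mul_self_nonneg _)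
  have hsUlt : sU < u 0 := by nlinarith [hu.2]
  have hden : 0 < u 0 - sU := by linarith
  set C0 := |∑ i ∈ S, (p i - q i) * u i| with hC0def
  set L := (q 0 * u 0 - p 0 * sU - C0) / (u 0 - sU) with hLdef
  -- lower bound on x 0 for x ∈ K
  have hxL : ∀ x ∈ K, L ≤ x 0 := by
    intro x hx
    obtain ⟨hx0, hxsp⟩ := hKfacts x hx
    obtain ⟨hxA, -, -⟩ := hx
    have hsupx := hqu x hxA
    rw [mink_split] at hsupx
    simp only [Pi.sub_apply] at hsupx
    have hsplit : (∑ i ∈ S, (x i - q i) * u i)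
        = (∑ i ∈ S, (x i - p i) * u i) + ∑ i ∈ S, (p i - q i) * u i := by
      rw [← Finset.sum_add_distrib]
      exact Finset.sum_congr rfl fun i _ => by ring
    have hcs1 : |∑ i ∈ S, (x i - p i) * u i| ≤
        Real.sqrt (∑ i ∈ S, (x i - p i) * (x i - p i)) * sU :=
      cs_abs S (fun i => x i - p i) u
    have hsq : Real.sqrt (∑ i ∈ S, (x i - p i) * (x i - p i)) ≤ p 0 - x 0 := by
      have h1 : Real.sqrt (∑ i ∈ S, (x i - p i) * (x i - p i))
          ≤ Real.sqrt ((p 0 - x 0) ^ 2) := Real.sqrt_le_sqrt hxsp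
      rwa [Real.sqrt_sq (by linarith)] at h1
    have h2 : (∑ i ∈ S, (x i - p i) * u i) ≥ -((p 0 - x 0) * sU) := by
      have := neg_abs_le (∑ i ∈ S, (x i - p i) * u i)
      have hmul : Real.sqrt (∑ i ∈ S, (x i - p i) * (x i - p i)) * sU
          ≤ (p 0 - x 0) * sU := mul_le_mul_of_nonneg_right hsq hsU0
      linarith
    have h3 : (∑ i ∈ S, (p i - q i) * u i) ≥ -C0 := neg_abs_le _
    rw [hLdef, div_le_iff₀ hden]
    nlinarith [hsupx, hsplit, h2, h3]
  -- K is bounded, hence compact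
  have hKb : Bornology.IsBounded K := by
    apply (Metric.isBounded_closedBall (x := p) (r := p 0 - L)).subset
    intro x hx
    obtain ⟨hx0, hxsp⟩ := hKfacts x hx
    have hL := hxL x hx
    rw [Metric.mem_closedBall, dist_eq_norm]
    rw [pi_norm_le_iff_of_nonneg (by linarith)]
    intro i
    rw [Pi.sub_apply, Real.norm_eq_abs]
    by_cases hi : i = 0
    · subst hi
      rw [abs_of_nonpos (by linarith)]
      linarith
    · have hiS : i ∈ S := Finset.mem_erase.mpr ⟨hi, Finset.mem_univ i⟩
      have hsingle : (x i - p i) * (x i - p i) ≤ ∑ j ∈ S, (x j - p j) * (x j - p j) :=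
        Finset.single_le_sum (f := fun j => (x j - p j) * (x j - p j))
          (fun j _ => mul_self_nonneg _) hiS
      rw [abs_le]
      constructor <;> nlinarith
  have hKcomp : IsCompact K := Metric.isCompact_of_isClosed_isBounded hKc hKb
  -- p ∈ K
  have hpA : p ∈ A := interior_subset hp
  have hpK : p ∈ K := by
    refine ⟨hpA, ?_, ?_⟩
    · rw [sub_self]
      have : mink (n := n) 0 0 = 0 := by unfold mink; simp
      rw [this]
    · rw [sub_self]; rfl
  -- maximizer
  obtain ⟨r, hrK, hrmax⟩ := hKcomp.exists_isMaxOn ⟨p, hpK⟩ hfc.continuousOn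
  obtain ⟨hrA, hrcp⟩ := hrK
  -- f is nonneg on K, and f r > 0
  obtain ⟨ε, hε, hball⟩ := Metric.mem_nhds_iff.mp (mem_interior_iff_mem_nhds.mp hp)
  have hfr_pos : 0 < f r := by
    set cb : Fin (n+1) → ℝ := fun i => if i = 0 then ε/2 else 0 with hcbdef
    have habs : |ε/2| = ε/2 := abs_of_nonneg (by linarith)
    have hcbnorm : ‖cb‖ ≤ ε/2 := by
      rw [pi_norm_le_iff_of_nonneg (by linarith)]
      intro i
      simp only [hcbdef, Real.norm_eq_abs]
      by_cases hi : i = 0 <;> simp [hi, habs] <;> linarith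
    set q' : Fin (n+1) → ℝ := p - cb with hq'def
    have hq'A : q' ∈ A := by
      apply hball
      rw [Metric.mem_ball, dist_eq_norm]
      have : q' - p = -cb := by rw [hq'def]; ring
      rw [this, norm_neg]
      linarith
    have hq'sub : q' - p = -cb := by rw [hq'def]; ring
    have hmcb : mink cb cb = -((ε/2) * (ε/2)) := bump_mink_self (ε/2)
    have hq'cp : InCausalPast q' p := by
      constructor
      · rw [hq'sub, mink_neg_neg, hmcb]; nlinarith
      · rw [hq'sub]
        simp [hcbdef]
        linarith
    have hfq' : f q' = (ε/2) * (ε/2) := by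
      rw [hfdef]
      have : p - q' = cb := by rw [hq'def]; ring
      simp only [this, hmcb]
      ring
    have := hrmax ⟨hq'A, hq'cp⟩
    simp only [Set.mem_setOf_eq] at this
    have h2 : f q' ≤ f r := this
    have hpos : (0:ℝ) < ε/2 * (ε/2) := by positivity
    exact lt_of_lt_of_le (hpos.trans_eq hfq'.symm) h2
  -- r is not in the interior of A
  have hrnotint : r ∉ interior A := by
    intro hri
    obtain ⟨δ, hδ, hball'⟩ := Metric.mem_nhds_iff.mp (mem_interior_iff_mem_nhds.mp hri)
    set cb : Fin (n+1) → ℝ := fun i => if i = 0 then δ/2 else 0 with hcbdef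
    set x' : Fin (n+1) → ℝ := r - cb with hx'def
    have hx'A : x' ∈ A := by
      apply hball'
      rw [Metric.mem_ball, dist_eq_norm]
      have : x' - r = -cb := by rw [hx'def]; ring
      rw [this, norm_neg]
      have habs : |δ/2| = δ/2 := abs_of_nonneg (by linarith)
      have : ‖cb‖ ≤ δ/2 := by
        rw [pi_norm_le_iff_of_nonneg (by linarith)]
        intro i
        simp only [hcbdef, Real.norm_eq_abs]
        by_cases hi : i = 0 <;> simp [hi, habs] <;> linarith
      linarith
    have hv0 : 0 ≤ (p - r) 0 := by
      have := hrcp.2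
      rw [Pi.sub_apply] at this ⊢
      linarith
    have hexp : mink (p - x') (p - x') =
        mink (p - r) (p - r) + 2 * (-((p - r) 0 * (δ/2))) + (-((δ/2) * (δ/2))) := by
      have h1 : p - x' = (p - r) + cb := by rw [hx'def]; ring
      rw [h1, mink_add_add, bump_mink_left, bump_mink_self]
    have hfx' : f x' = f r + (p - r) 0 * δ + (δ/2) * (δ/2) := by
      simp only [hfdef]
      rw [hexp]; ring
    have hfx'gt : f r < f x' := by
      rw [hfx']
      nlinarith [mul_nonneg hv0 (le_of_lt hδ)]
    have hx'cp : InCausalPast x' p := by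
      constructor
      · have : mink (x' - p) (x' - p) = mink (p - x') (p - x') := mink_sub_symm _ _
        rw [this]
        have : mink (p - x') (p - x') = -(f x') := by simp [hfdef]
        rw [this]
        linarith
      · have h1 : (x' - p) 0 = (r - p) 0 - δ/2 := by
          simp [hx'def, hcbdef]
          ring
        rw [h1]
        have := hrcp.2
        linarith
    have := hrmax ⟨hx'A, hx'cp⟩
    simp only [Set.mem_setOf_eq] at this
    linarith [hfx'gt, this]
  -- r satisfies the property
  have hrfr : r ∈ frontier A := by
    rw [hclosed.frontier_eq]
    exact ⟨hrA, hrnotint⟩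
  have hrprop : ∀ q' ∈ A, InCausalPast q' p →
      Real.sqrt (-(mink (p - q') (p - q'))) ≤ Real.sqrt (-(mink (p - r) (p - r))) := by
    intro q' hq'A hq'cp
    apply Real.sqrt_le_sqrt
    have := hrmax ⟨hq'A, hq'cp⟩
    simpa only [Set.mem_setOf_eq] using this
  refine ⟨r, ⟨hrfr, hrcp, hrprop⟩, ?_⟩
  -- uniqueness
  rintro r' ⟨hr'fr, hr'cp, hr'prop⟩
  have hr'A : r' ∈ A := by
    have := frontier_subset_closure (s := A) hr'fr
    rwa [hclosed.closure_eq] at this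
  -- f r' = f r
  have hfr'_le : f r' ≤ f r := by
    have := hrmax ⟨hr'A, hr'cp⟩
    simpa only [Set.mem_setOf_eq] using this
  have hfr'_nonneg : 0 ≤ f r' := by
    have := hr'cp.1
    rw [mink_sub_symm] at this
    simp only [hfdef]
    linarith
  have hsqrt_le : Real.sqrt (f r) ≤ Real.sqrt (f r') := hr'prop r hrA hrcp
  have hfeq : f r' = f r := by
    have h1 : Real.sqrt (f r') ≤ Real.sqrt (f r) := Real.sqrt_le_sqrt hfr'_le
    have h2 : Real.sqrt (f r') = Real.sqrt (f r) := le_antisymm h1 hsqrt_le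
    have h3 : Real.sqrt (f r') ^ 2 = Real.sqrt (f r) ^ 2 := by rw [h2]
    rwa [Real.sq_sqrt hfr'_nonneg, Real.sq_sqrt (le_of_lt hfr_pos)] at h3
  -- set up the algebraic data
  set v : Fin (n+1) → ℝ := p - r with hvdef
  set w : Fin (n+1) → ℝ := p - r' with hwdef
  set a2 := ∑ i ∈ S, v i * v i with ha2def
  set b2 := ∑ i ∈ S, w i * w i with hb2def
  set c := ∑ i ∈ S, v i * w i with hcdef
  set d2 := f r with hd2def
  have hv0 : 0 ≤ v 0 := by
    have := hrcp.2; rw [Pi.sub_apply] at this; rw [hvdef, Pi.sub_apply]; linarith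
  have hw0 : 0 ≤ w 0 := by
    have := hr'cp.2; rw [Pi.sub_apply] at this; rw [hwdef, Pi.sub_apply]; linarith
  have ha2nn : 0 ≤ a2 := Finset.sum_nonneg fun i _ => mul_self_nonneg _
  have hb2nn : 0 ≤ b2 := Finset.sum_nonneg fun i _ => mul_self_nonneg _
  have hcs : c ^ 2 ≤ a2 * b2 := by
    calc c ^ 2 ≤ (∑ i ∈ S, v i ^ 2) * (∑ i ∈ S, w i ^ 2) :=
          Finset.sum_mul_sq_le_sq_mul_sq S v w
      _ = a2 * b2 := by rw [ha2def, hb2def]; simp_rw [pow_two]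
  have hminkv : mink v v = a2 - v 0 ^ 2 := by
    rw [mink_split, ha2def]; ring
  have hminkw : mink w w = b2 - w 0 ^ 2 := by
    rw [mink_split, hb2def]; ring
  have hminkvw : mink v w = c - v 0 * w 0 := by
    rw [mink_split, hcdef]
  have ha : v 0 ^ 2 - a2 = d2 := by
    have : f r = -(mink v v) := by simp [hfdef, hvdef]
    rw [hd2def, this, hminkv]; ring
  have hb : w 0 ^ 2 - b2 = d2 := by
    have : f r' = -(mink w w) := by simp [hfdef, hwdef]
    rw [← hfeq, this, hminkw]; ring
  have hd2pos : 0 < d2 := hfr_pos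
  -- the midpoint
  set m : Fin (n+1) → ℝ := (1/2 : ℝ) • r + (1/2 : ℝ) • r' with hmdef
  have hmA : m ∈ A := hconv hrA hr'A (by norm_num) (by norm_num) (by norm_num)
  have hpm : p - m = (1/2 : ℝ) • (v + w) := by
    rw [hmdef, hvdef, hwdef]
    ext i
    simp [Pi.smul_apply, Pi.sub_apply, Pi.add_apply]
    ring
  have hfm : f m = (d2 + (v 0 * w 0 - c)) / 2 := by
    simp only [hfdef]
    rw [hpm, mink_smul, mink_add_add, hminkv, hminkw, hminkvw]
    linarith [ha, hb]
  have hrev := lorentz_rev (v 0) (w 0) a2 b2 c d2 hv0 hw0 ha2nn hb2nn hcs ha hb hd2pos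
  have hfm_pos : 0 < f m := by rw [hfm]; linarith
  have hmcp : InCausalPast m p := by
    constructor
    · rw [mink_sub_symm]
      have : mink (p - m) (p - m) = -(f m) := by simp [hfdef]
      rw [this]; linarith
    · rw [Pi.sub_apply, hmdef]
      have h1 := hrcp.2
      have h2 := hr'cp.2
      rw [Pi.sub_apply] at h1 h2
      simp only [Pi.add_apply, Pi.smul_apply, smul_eq_mul]
      linarith
  have hfm_le : f m ≤ d2 := by
    have := hrmax ⟨hmA, hmcp⟩
    simpa only [Set.mem_setOf_eq] using this
  have hub : v 0 * w 0 - c ≤ d2 := by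
    rw [hfm] at hfm_le
    linarith
  obtain ⟨hvw0, hsum0⟩ :=
    lorentz_eq (v 0) (w 0) a2 b2 c d2 hv0 hw0 ha2nn hb2nn hcs ha hb hd2pos hub
  -- conclude r' = r
  have hdiff : ∑ i ∈ S, (v i - w i) * (v i - w i) = a2 - 2 * c + b2 := by
    rw [ha2def, hb2def, hcdef, Finset.mul_sum, ← Finset.sum_sub_distrib,
      ← Finset.sum_add_distrib]
    exact Finset.sum_congr rfl fun i _ => by ring
  have hzero : ∑ i ∈ S, (v i - w i) * (v i - w i) = 0 := by
    rw [hdiff]; linarith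
  have hterms := (Finset.sum_eq_zero_iff_of_nonneg
    (fun i _ => mul_self_nonneg (v i - w i))).mp hzero
  have hveqw : v = w := by
    funext i
    by_cases hi : i = 0
    · subst hi; exact hvw0
    · have hiS : i ∈ S := Finset.mem_erase.mpr ⟨hi, Finset.mem_univ i⟩
      have := hterms i hiS
      have h0 : v i - w i = 0 := mul_self_eq_zero.mp this
      linarith
  have : p - r = p - r' := by rw [← hvdef, ← hwdef, hveqw]
  funext i
  have := congrFun this i
  rw [Pi.sub_apply, Pi.sub_apply] at this
  linarith
end

section
/- With A, p, r(p) as above, the point r = r(p) is characterized as the unique point in ∂A such that the hyperplane r + (p-r)^⊥ is a support plane for A. -/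
private lemma sum_expand {ι : Type*} [Fintype ι] (a b : ι → ℝ) (t : ℝ) :
    (∑ i, (t * a i - b i) * (t * a i - b i))
      = t*t*(∑ i, a i * a i) - 2*t*(∑ i, a i * b i) + ∑ i, b i * b i := by
  rw [Finset.mul_sum, Finset.mul_sum, ← Finset.sum_sub_distrib, ← Finset.sum_add_distrib]
  exact Finset.sum_congr rfl fun i _ => by ring

lemma mink_eq {n : ℕ} (v w : Fin (n+1) → ℝ) :
    mink v w = (∑ i : Fin n, v i.succ * w i.succ) - v 0 * w 0 := by
  simp only [mink]
  rw [Fin.sum_univ_succ]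
  ring

lemma mink_comm {n : ℕ} (v w : Fin (n+1) → ℝ) : mink v w = mink w v := by
  simp only [mink]
  rw [show (∑ i, v i * w i) = ∑ i, w i * v i from
    Finset.sum_congr rfl fun i _ => mul_comm _ _]
  ring

lemma mink_neg {n : ℕ} (a : Fin (n+1) → ℝ) : mink (-a) (-a) = mink a a := by
  simp only [mink, Pi.neg_apply, neg_mul_neg]
  ring

lemma mink_sub_left {n : ℕ} (a b c : Fin (n+1) → ℝ) :
    mink (a - b) c = mink a c - mink b c := by
  simp only [mink, Pi.sub_apply]
  rw [show (∑ i, (a i - b i) * c i) = (∑ i, a i * c i) - ∑ i, b i * c i from by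
    rw [← Finset.sum_sub_distrib]; exact Finset.sum_congr rfl fun i _ => by ring]
  ring

lemma mink_expand1 {n : ℕ} (w v : Fin (n+1) → ℝ) (t : ℝ) :
    mink (t • w - v) (t • w - v) = t*t*mink w w - 2*t*mink w v + mink v v := by
  simp only [mink, Pi.sub_apply, Pi.smul_apply, smul_eq_mul]
  rw [sum_expand]
  ring

lemma mink_sub_sub {n : ℕ} (a b : Fin (n+1) → ℝ) :
    mink (a - b) (a - b) = mink a a - 2*mink a b + mink b b := by
  have h := mink_expand1 a b 1
  rw [one_smul] at h
  linarith

lemma perp_timelike_eq_zero {n : ℕ} {v w : Fin (n+1) → ℝ}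
    (hv : mink v v < 0) (ho : mink v w = 0) (hw : mink w w ≤ 0) : w = 0 := by
  rw [mink_eq] at hv ho hw
  have ha0 : 0 ≤ ∑ i : Fin n, v i.succ * v i.succ :=
    Finset.sum_nonneg fun i _ => mul_self_nonneg _
  have hb0 : 0 ≤ ∑ i : Fin n, w i.succ * w i.succ :=
    Finset.sum_nonneg fun i _ => mul_self_nonneg _
  have hcs : (∑ i : Fin n, v i.succ * w i.succ) * (∑ i : Fin n, v i.succ * w i.succ)
      ≤ (∑ i : Fin n, v i.succ * v i.succ) * (∑ i : Fin n, w i.succ * w i.succ) := by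
    simpa only [pow_two] using
      Finset.sum_mul_sq_le_sq_mul_sq Finset.univ (fun i : Fin n => v i.succ)
        (fun i : Fin n => w i.succ)
  set a := ∑ i : Fin n, v i.succ * v i.succ with ha_def
  set b := ∑ i : Fin n, w i.succ * w i.succ with hb_def
  set s := ∑ i : Fin n, v i.succ * w i.succ with hs_def
  have hv0sq : 0 < v 0 * v 0 := by nlinarith
  have hw0 : w 0 = 0 := by
    by_contra hne
    have hw2 : 0 < w 0 * w 0 := mul_self_pos.mpr hne
    have hb_pos : 0 < b := by
      rcases hb0.lt_or_eq with h | h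
      · exact h
      · exfalso
        have hs0 : s = 0 := by nlinarith
        have hz : v 0 * w 0 = 0 := by linarith
        rcases mul_eq_zero.mp hz with h' | h'
        · nlinarith
        · exact hne h'
    have hSS : s * s = (v 0 * w 0) * (v 0 * w 0) := by
      have h' : s = v 0 * w 0 := by linarith
      rw [h']
    nlinarith [mul_pos (show (0:ℝ) < v 0 * v 0 - a by linarith) hb_pos,
      mul_nonneg (mul_self_nonneg (v 0)) (show (0:ℝ) ≤ w 0 * w 0 - b by linarith)]
  have hb_le : b ≤ 0 := by rw [hw0] at hw; simpa using hw
  have hb_zero : (∑ i : Fin n, w i.succ * w i.succ) = 0 := by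
    rw [← hb_def]; exact le_antisymm hb_le hb0
  have hz : ∀ j : Fin n, w j.succ = 0 := by
    intro j
    have h := (Finset.sum_eq_zero_iff_of_nonneg
      (fun i _ => mul_self_nonneg (w i.succ))).mp hb_zero j (Finset.mem_univ j)
    exact mul_self_eq_zero.mp h
  funext i
  refine Fin.cases ?_ (fun j => ?_) i
  · simpa using hw0
  · simpa using hz j

lemma rcs {n : ℕ} {v w : Fin (n+1) → ℝ} (hv : mink v v < 0) (hv0 : 0 < v 0)
    (hw : mink w w < 0) (hw0 : 0 < w 0) :
    mink v w < 0 ∧ mink v v * mink w w ≤ mink v w * mink v w := by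
  rw [mink_eq] at hv hw
  rw [mink_eq v w, mink_eq v v, mink_eq w w]
  have ha0 : 0 ≤ ∑ i : Fin n, v i.succ * v i.succ :=
    Finset.sum_nonneg fun i _ => mul_self_nonneg _
  have hb0 : 0 ≤ ∑ i : Fin n, w i.succ * w i.succ :=
    Finset.sum_nonneg fun i _ => mul_self_nonneg _
  have hcs : (∑ i : Fin n, v i.succ * w i.succ) * (∑ i : Fin n, v i.succ * w i.succ)
      ≤ (∑ i : Fin n, v i.succ * v i.succ) * (∑ i : Fin n, w i.succ * w i.succ) := by
    simpa only [pow_two] using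
      Finset.sum_mul_sq_le_sq_mul_sq Finset.univ (fun i : Fin n => v i.succ)
        (fun i : Fin n => w i.succ)
  set a := ∑ i : Fin n, v i.succ * v i.succ with ha_def
  set b := ∑ i : Fin n, w i.succ * w i.succ with hb_def
  set s := ∑ i : Fin n, v i.succ * w i.succ with hs_def
  obtain ⟨α, hα, hα2⟩ : ∃ α : ℝ, 0 ≤ α ∧ α * α = a :=
    ⟨Real.sqrt a, Real.sqrt_nonneg _, Real.mul_self_sqrt ha0⟩
  obtain ⟨β, hβ, hβ2⟩ : ∃ β : ℝ, 0 ≤ β ∧ β * β = b :=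
    ⟨Real.sqrt b, Real.sqrt_nonneg _, Real.mul_self_sqrt hb0⟩
  have hαv : α < v 0 := by nlinarith
  have hβw : β < w 0 := by nlinarith
  have hs : s ≤ α * β := by nlinarith [mul_nonneg hα hβ, sq_nonneg (s - α*β), sq_nonneg (s + α*β)]
  have hmm : α * β < v 0 * w 0 := mul_lt_mul'' hαv hβw hα hβ
  constructor
  · linarith
  · have h1 : 0 ≤ (α*β - s) * (2*(v 0 * w 0) - s - α*β) :=
      mul_nonneg (by linarith) (by linarith)
    rw [← hα2, ← hβ2]
    nlinarith [h1, sq_nonneg (v 0 * β - w 0 * α)]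

set_option maxHeartbeats 1000000 in
/-- Characterization of the Lorentz-distance maximizer: with `A` a closed future-complete
convex set having a spacelike support plane, `p` an interior point and `r = r(p)` the
maximizer of the Lorentzian distance from `p` on `∂A ∩ (causal past of p)`, the point `r`
is the unique point of `∂A` such that the hyperplane `r + (p-r)^⊥` is a (spacelike)
support plane for `A`. -/
theorem maximizer_iff_support_plane {n : ℕ}
    (A : Set (Fin (n+1) → ℝ)) (hconv : Convex ℝ A) (hclosed : IsClosed A)
    (hfut : ∀ p ∈ A, ∀ v : Fin (n+1) → ℝ, TimelikeFuture v → p + v ∈ A)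
    (hsupp : ∃ q u : Fin (n+1) → ℝ, TimelikeFuture u ∧ ∀ x ∈ A, mink (x - q) u ≤ 0)
    (p : Fin (n+1) → ℝ) (hp : p ∈ interior A)
    (r : Fin (n+1) → ℝ) (hrA : r ∈ frontier A) (hrpast : InCausalPast r p)
    (hrmax : ∀ q ∈ A, InCausalPast q p →
      Real.sqrt (-(mink (p - q) (p - q))) ≤ Real.sqrt (-(mink (p - r) (p - r)))) :
    (∀ x ∈ A, mink (x - r) (p - r) ≤ 0) ∧
      (∀ r' ∈ frontier A, TimelikeFuture (p - r') →
        (∀ x ∈ A, mink (x - r') (p - r') ≤ 0) → r' = r) := by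
  classical
  have hA_r : r ∈ A := by
    have h := frontier_subset_closure hrA
    rwa [hclosed.closure_eq] at h
  set v : Fin (n+1) → ℝ := p - r with hv_def
  obtain ⟨hr1, hr2⟩ : mink (r - p) (r - p) ≤ 0 ∧ (r - p) 0 ≤ 0 := hrpast
  -- find a point strictly below p in A, to get strict timelikeness of v
  obtain ⟨ε, hε, hball⟩ := Metric.isOpen_iff.mp isOpen_interior p hp
  set u : Fin (n+1) → ℝ := fun i => if i = 0 then ε/2 else 0 with hu_def
  have hu_succ : ∀ i : Fin n, u i.succ = 0 := fun i => by
    simp [hu_def, Fin.succ_ne_zero]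
  have huu : mink u u = -(ε/2 * (ε/2)) := by
    rw [mink_eq]
    rw [Finset.sum_eq_zero fun i _ => by rw [hu_succ i]; ring]
    simp [hu_def]
  set q0 : Fin (n+1) → ℝ := p - u with hq0_def
  have hq0A : q0 ∈ A := by
    apply interior_subset
    apply hball
    rw [Metric.mem_ball]
    rw [dist_pi_lt_iff hε]
    intro i
    rw [Real.dist_eq]
    have h1 : q0 i - p i = -(u i) := by simp [hq0_def]
    rw [h1, abs_neg]
    by_cases hi : i = 0
    · have hui : u i = ε/2 := by simp [hu_def, hi]
      rw [hui, abs_of_nonneg (by positivity)]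
      linarith
    · have hui : u i = 0 := by simp [hu_def, hi]
      rw [hui]
      simpa using hε
  have hq0p : q0 - p = -u := by
    funext i; simp [hq0_def]
  have hq0past : InCausalPast q0 p := by
    refine ⟨?_, ?_⟩
    · rw [hq0p, mink_neg, huu]
      nlinarith
    · rw [hq0p]
      have hu0 : u 0 = ε/2 := by simp [hu_def]
      simp only [Pi.neg_apply, hu0]
      linarith
  have hpq0 : p - q0 = u := by
    funext i; simp [hq0_def]
  have hq0max := hrmax q0 hq0A hq0past
  rw [hpq0, huu] at hq0max
  have hhalf : Real.sqrt (-(-(ε/2 * (ε/2)))) = ε/2 := by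
    rw [neg_neg]
    exact Real.sqrt_mul_self (by positivity)
  rw [hhalf] at hq0max
  have hsqrt_pos : 0 < Real.sqrt (-(mink v v)) := lt_of_lt_of_le (by positivity) hq0max
  have hvlt : mink v v < 0 := by
    have h := Real.sqrt_pos.mp hsqrt_pos
    linarith
  have hv0 : 0 < v 0 := by
    have hge : 0 ≤ v 0 := by
      have h2 : r 0 - p 0 ≤ 0 := by simpa using hr2
      rw [hv_def]; simp only [Pi.sub_apply]; linarith
    have hsq : 0 < v 0 * v 0 := by
      have h := hvlt
      rw [mink_eq] at h
      nlinarith [Finset.sum_nonneg (fun (i : Fin n) (_ : i ∈ Finset.univ) =>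
        mul_self_nonneg (v i.succ))]
    rcases hge.lt_or_eq with h | h
    · exact h
    · exfalso; rw [← h] at hsq; simp at hsq
  -- Part 1: support plane at r
  have part1 : ∀ x ∈ A, mink (x - r) v ≤ 0 := by
    intro x hx
    by_contra hcon
    push_neg at hcon
    set w : Fin (n+1) → ℝ := x - r with hw_def
    have hcpos : 0 < mink w v := hcon
    set M := max 1 (mink w w) with hM_def
    set W := max 1 (w 0) with hW_def
    have hMpos : (0:ℝ) < M := lt_of_lt_of_le one_pos (le_max_left _ _)
    have hWpos : (0:ℝ) < W := lt_of_lt_of_le one_pos (le_max_left _ _)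
    set t := min 1 (min (mink w v / M) (v 0 / (2 * W))) with ht_def
    have ht0 : 0 < t :=
      lt_min one_pos (lt_min (div_pos hcpos hMpos) (div_pos hv0 (by positivity)))
    have ht1 : t ≤ 1 := min_le_left _ _
    have htc : t * M ≤ mink w v := by
      have h : t ≤ mink w v / M := (min_le_right _ _).trans (min_le_left _ _)
      exact (le_div_iff₀ hMpos).mp h
    have htW : t * (2 * W) ≤ v 0 := by
      have h : t ≤ v 0 / (2 * W) := (min_le_right _ _).trans (min_le_right _ _)
      exact (le_div_iff₀ (by positivity)).mp h
    set q := r + t • w with hq_def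
    have hqA : q ∈ A := by
      have heq : q = (1 - t) • r + t • x := by
        funext i
        simp only [hq_def, hw_def, Pi.add_apply, Pi.sub_apply, Pi.smul_apply, smul_eq_mul]
        ring
      rw [heq]
      exact hconv hA_r hx (by linarith) ht0.le (by ring)
    have hqp : q - p = t • w - v := by
      funext i
      simp only [hq_def, hv_def, hw_def, Pi.add_apply, Pi.sub_apply, Pi.smul_apply,
        smul_eq_mul]
      ring
    have hqm : mink (q - p) (q - p) = t*t*mink w w - 2*t*mink w v + mink v v := by
      rw [hqp, mink_expand1]
    have hMw : mink w w ≤ M := le_max_right _ _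
    have hkey : mink (q - p) (q - p) ≤ mink v v - t * mink w v := by
      rw [hqm]
      linarith only [mul_le_mul_of_nonneg_left hMw (mul_nonneg ht0.le ht0.le),
        mul_le_mul_of_nonneg_left htc ht0.le]
    have hqpast : InCausalPast q p := by
      refine ⟨?_, ?_⟩
      · linarith only [hkey, hvlt, mul_pos ht0 hcpos]
      · have he : (q - p) 0 = t * w 0 - v 0 := by
          simp only [hq_def, hv_def, hw_def, Pi.add_apply, Pi.sub_apply, Pi.smul_apply,
            smul_eq_mul]
          ring
        rw [he]
        have hwW : w 0 ≤ W := le_max_right _ _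
        linarith only [mul_le_mul_of_nonneg_left hwW ht0.le, htW,
          mul_nonneg ht0.le hWpos.le]
    have hsym : mink (p - q) (p - q) = mink (q - p) (q - p) := by
      rw [← neg_sub q p, mink_neg]
    have hgt : -(mink v v) < -(mink (p - q) (p - q)) := by
      rw [hsym]
      linarith only [hkey, mul_pos ht0 hcpos]
    have hlt := Real.sqrt_lt_sqrt (by linarith only [hvlt] : (0:ℝ) ≤ -(mink v v)) hgt
    have hle := hrmax q hqA hqpast
    linarith only [hlt, hle]
  refine ⟨part1, ?_⟩
  -- Part 2: uniqueness
  intro r' hr'F hr'T hr'supp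
  have hA_r' : r' ∈ A := by
    have h := frontier_subset_closure hr'F
    rwa [hclosed.closure_eq] at h
  set v' : Fin (n+1) → ℝ := p - r' with hv'_def
  obtain ⟨hv'lt, hv'0⟩ : mink v' v' < 0 ∧ 0 < v' 0 := hr'T
  have hr'p : r' - p = -v' := by
    funext i; simp [hv'_def]
  have hr'past : InCausalPast r' p := by
    refine ⟨?_, ?_⟩
    · rw [hr'p, mink_neg]; linarith
    · rw [hr'p]
      simp only [Pi.neg_apply]
      linarith
  have hle1 : -(mink v' v') ≤ -(mink v v) := by
    have h := hrmax r' hA_r' hr'past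
    rw [← hv'_def] at h
    have h2 := mul_self_le_mul_self (Real.sqrt_nonneg _) h
    rw [Real.mul_self_sqrt (by linarith : (0:ℝ) ≤ -(mink v' v')),
        Real.mul_self_sqrt (by linarith : (0:ℝ) ≤ -(mink v v))] at h2
    exact h2
  have hsr : mink (r - r') v' ≤ 0 := hr'supp r hA_r
  have hvv' : mink v v' = mink v' v' - mink (r - r') v' := by
    rw [hv_def, hv'_def, mink_sub_left p r (p - r'), mink_sub_left p r' (p - r'),
      mink_sub_left r r' (p - r')]
    ring
  have hc_ge : mink v' v' ≤ mink v v' := by linarith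
  obtain ⟨hcneg, hcsq⟩ := rcs hvlt hv0 hv'lt hv'0
  have hPP' : mink v v ≤ mink v' v' := by linarith
  have h1 : mink v v' * mink v v' ≤ mink v' v' * mink v' v' := by
    nlinarith [mul_nonneg (sub_nonneg.mpr hc_ge)
      (neg_nonneg.mpr (show mink v v' + mink v' v' ≤ 0 by linarith))]
  have hP'leP : mink v' v' ≤ mink v v := by nlinarith
  have hPeq : mink v v = mink v' v' := le_antisymm hPP' hP'leP
  have hc_le : mink v v' ≤ mink v' v' := by nlinarith
  have hceq : mink v v' = mink v' v' := le_antisymm hc_le hc_ge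
  have hd1 : mink (v - v') (v - v') = 0 := by
    rw [mink_sub_sub, hPeq, hceq]; ring
  have hd2 : mink v' (v - v') = 0 := by
    rw [mink_comm, mink_sub_left]
    linarith
  have hdz : v - v' = 0 := perp_timelike_eq_zero hv'lt hd2 (le_of_eq hd1)
  have hvv : v = v' := sub_eq_zero.mp hdz
  rw [hv_def, hv'_def] at hvv
  funext i
  have h := congrFun hvv i
  simp only [Pi.sub_apply] at h
  linarith
end

section
/- Let A ⊂ M^{n+1} be a future-complete convex set with spacelike support plane, T(p) = √(-⟨p-r(p), p-r(p)⟩) its cosmological time, where r(p) is the maximizer of Lorentzian distance as above. Then -T is a convex function on the interior of A; equivalently, for all p, q in the interior of A and t ∈ [0,1], T(tp + (1-t)q) ≥ t·T(p) + (1-t)·T(q). -/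
/-- `r` maximizes the Lorentzian distance from `p` over `A ∩ (causal past of p)`;
the cosmological time is `T(p) = √(-⟨p - r, p - r⟩)`. -/
def IsCTMaximizer {n : ℕ} (A : Set (Fin (n+1) → ℝ)) (p r : Fin (n+1) → ℝ) : Prop :=
  r ∈ frontier A ∧ InCausalPast r p ∧
    ∀ q ∈ A, InCausalPast q p →
      Real.sqrt (-(mink (p - q) (p - q))) ≤ Real.sqrt (-(mink (p - r) (p - r)))

/-- Spatial part of the Minkowski form. -/
noncomputable def smink {n : ℕ} (v w : Fin (n+1) → ℝ) : ℝ :=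
  ∑ i, (if i = 0 then 0 else v i) * (if i = 0 then 0 else w i)

lemma mink_eq_smink {n : ℕ} (v w : Fin (n+1) → ℝ) :
    mink v w = smink v w - v 0 * w 0 := by
  unfold mink smink
  rw [show (∑ i, v i * w i) = ∑ i : Fin (n+1),
      ((if i = 0 then 0 else v i) * (if i = 0 then 0 else w i)
        + (if i = 0 then v i * w i else 0)) from
    Finset.sum_congr rfl fun i _ => by by_cases h : i = 0 <;> simp [h],
    Finset.sum_add_distrib, Finset.sum_ite_eq' Finset.univ (0 : Fin (n+1))]
  simp
  ring

lemma smink_self_nonneg {n : ℕ} (v : Fin (n+1) → ℝ) : 0 ≤ smink v v :=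
  Finset.sum_nonneg fun i _ => mul_self_nonneg _

lemma smink_cs {n : ℕ} (v w : Fin (n+1) → ℝ) :
    smink v w ≤ Real.sqrt (smink v v) * Real.sqrt (smink w w) := by
  have h := Finset.sum_mul_sq_le_sq_mul_sq (Finset.univ : Finset (Fin (n+1)))
    (fun i => if i = 0 then 0 else v i) (fun i => if i = 0 then 0 else w i)
  have hvv : (∑ i : Fin (n+1), (if i = 0 then 0 else v i) ^ 2) = smink v v := by
    unfold smink; exact Finset.sum_congr rfl fun i _ => by ring
  have hww : (∑ i : Fin (n+1), (if i = 0 then 0 else w i) ^ 2) = smink w w := by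
    unfold smink; exact Finset.sum_congr rfl fun i _ => by ring
  simp only [hvv, hww] at h
  have h2 : smink v w ^ 2 ≤ smink v v * smink w w := h
  calc smink v w ≤ Real.sqrt (smink v w ^ 2) := by
        rw [Real.sqrt_sq_eq_abs]; exact le_abs_self _
    _ ≤ Real.sqrt (smink v v * smink w w) := Real.sqrt_le_sqrt h2
    _ = Real.sqrt (smink v v) * Real.sqrt (smink w w) :=
        Real.sqrt_mul (smink_self_nonneg v) _

/-- Reverse Cauchy–Schwarz for future causal vectors. -/
lemma rev_cs {n : ℕ} (u v : Fin (n+1) → ℝ)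
    (hu : mink u u ≤ 0) (hu0 : 0 ≤ u 0) (hv : mink v v ≤ 0) (hv0 : 0 ≤ v 0) :
    mink u v ≤ -(Real.sqrt (-(mink u u)) * Real.sqrt (-(mink v v))) := by
  set a := Real.sqrt (smink u u) with ha
  set c := Real.sqrt (smink v v) with hc
  have ha0 : 0 ≤ a := Real.sqrt_nonneg _
  have hc0 : 0 ≤ c := Real.sqrt_nonneg _
  have ha2 : a ^ 2 = smink u u := Real.sq_sqrt (smink_self_nonneg u)
  have hc2 : c ^ 2 = smink v v := Real.sq_sqrt (smink_self_nonneg v)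
  have huu : mink u u = a ^ 2 - u 0 * u 0 := by rw [mink_eq_smink, ha2]
  have hvv : mink v v = c ^ 2 - v 0 * v 0 := by rw [mink_eq_smink, hc2]
  have hab : a ≤ u 0 := by nlinarith [hu, huu]
  have hcd : c ≤ v 0 := by nlinarith [hv, hvv]
  have hcs : mink u v ≤ a * c - u 0 * v 0 := by
    rw [mink_eq_smink]; have := smink_cs u v; linarith
  have key : Real.sqrt (-(mink u u)) * Real.sqrt (-(mink v v))
      ≤ u 0 * v 0 - a * c := by
    rw [← Real.sqrt_mul (by linarith)]
    have hnn : 0 ≤ u 0 * v 0 - a * c := by nlinarith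
    calc Real.sqrt (-mink u u * -mink v v) ≤ Real.sqrt ((u 0 * v 0 - a * c) ^ 2) := by
          apply Real.sqrt_le_sqrt
          rw [huu, hvv]
          nlinarith [sq_nonneg (u 0 * c - a * v 0)]
      _ = u 0 * v 0 - a * c := Real.sqrt_sq hnn
  linarith

lemma mink_comb {n : ℕ} (s r : ℝ) (u v : Fin (n+1) → ℝ) :
    mink (s • u + r • v) (s • u + r • v)
      = s ^ 2 * mink u u + 2 * s * r * mink u v + r ^ 2 * mink v v := by
  unfold mink
  simp only [Pi.add_apply, Pi.smul_apply, smul_eq_mul]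
  rw [show (∑ i, (s * u i + r * v i) * (s * u i + r * v i))
      = ∑ i : Fin (n+1), (s ^ 2 * (u i * u i) + 2 * s * r * (u i * v i)
          + r ^ 2 * (v i * v i)) from Finset.sum_congr rfl fun i _ => by ring,
    Finset.sum_add_distrib, Finset.sum_add_distrib, ← Finset.mul_sum,
    ← Finset.mul_sum, ← Finset.mul_sum]
  ring

/-- Concavity of the cosmological time: for a future-complete convex set `A` with a
spacelike support plane and cosmological time `T(p) = √(-⟨p - r(p), p - r(p)⟩)` (with
`r(p)` the Lorentz-distance maximizer), `-T` is convex on the interior of `A`: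
`T(tp + (1-t)q) ≥ t·T(p) + (1-t)·T(q)` for `t ∈ [0,1]`. -/
theorem cosmological_time_concave {n : ℕ}
    (A : Set (Fin (n+1) → ℝ)) (hconv : Convex ℝ A) (hclosed : IsClosed A)
    (hfut : ∀ p ∈ A, ∀ v : Fin (n+1) → ℝ, TimelikeFuture v → p + v ∈ A)
    (hsupp : ∃ q u : Fin (n+1) → ℝ, TimelikeFuture u ∧ ∀ x ∈ A, mink (x - q) u ≤ 0)
    (p q : Fin (n+1) → ℝ) (hp : p ∈ interior A) (hq : q ∈ interior A)
    (t : ℝ) (ht : t ∈ Set.Icc (0:ℝ) 1)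
    (rp rq rm : Fin (n+1) → ℝ)
    (hrp : IsCTMaximizer A p rp) (hrq : IsCTMaximizer A q rq)
    (hrm : IsCTMaximizer A (t • p + (1 - t) • q) rm) :
    t * Real.sqrt (-(mink (p - rp) (p - rp))) +
        (1 - t) * Real.sqrt (-(mink (q - rq) (q - rq)))
      ≤ Real.sqrt (-(mink (t • p + (1 - t) • q - rm) (t • p + (1 - t) • q - rm))) := by
  obtain ⟨ht0, ht1⟩ := ht
  set u := p - rp with hu
  set v := q - rq with hv
  set m := t • p + (1 - t) • q with hm
  set r := t • rp + (1 - t) • rq with hr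
  -- basic causal facts
  have hneg : ∀ w : Fin (n+1) → ℝ, mink (-w) (-w) = mink w w := by
    intro w; unfold mink; simp
  have hup : InCausalPast rp p := hrp.2.1
  have hvp : InCausalPast rq q := hrq.2.1
  have huu : mink u u ≤ 0 := by
    have := hup.1; rwa [show rp - p = -u by rw [hu]; abel, hneg] at this
  have hu0 : 0 ≤ u 0 := by
    have := hup.2; simp only [hu, Pi.sub_apply] at this ⊢; linarith
  have hvv : mink v v ≤ 0 := by
    have := hvp.1; rwa [show rq - q = -v by rw [hv]; abel, hneg] at this
  have hv0 : 0 ≤ v 0 := by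
    have := hvp.2; simp only [hv, Pi.sub_apply] at this ⊢; linarith
  have hcs := rev_cs u v huu hu0 hvv hv0
  -- the combination
  have hmr : m - r = t • u + (1 - t) • v := by
    rw [hm, hr, hu, hv]; funext i; simp; ring
  have hcomb : mink (m - r) (m - r)
      = t ^ 2 * mink u u + 2 * t * (1 - t) * mink u v + (1 - t) ^ 2 * mink v v := by
    rw [hmr, mink_comb]
  set Tu := Real.sqrt (-(mink u u)) with hTu
  set Tv := Real.sqrt (-(mink v v)) with hTv
  have hTu2 : Tu ^ 2 = -(mink u u) := Real.sq_sqrt (by linarith)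
  have hTv2 : Tv ^ 2 = -(mink v v) := Real.sq_sqrt (by linarith)
  have hTu0 : 0 ≤ Tu := Real.sqrt_nonneg _
  have hTv0 : 0 ≤ Tv := Real.sqrt_nonneg _
  have hkey : (t * Tu + (1 - t) * Tv) ^ 2 ≤ -(mink (m - r) (m - r)) := by
    rw [hcomb]
    nlinarith [hcs, hTu2, hTv2, mul_nonneg (mul_nonneg ht0 (by linarith : (0:ℝ) ≤ 1 - t))
      (sub_nonneg.mpr hcs), mul_nonneg ht0 (sub_nonneg.mpr ht1)]
  have hsum0 : 0 ≤ t * Tu + (1 - t) * Tv :=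
    add_nonneg (mul_nonneg ht0 hTu0) (mul_nonneg (by linarith) hTv0)
  have step1 : t * Tu + (1 - t) * Tv ≤ Real.sqrt (-(mink (m - r) (m - r))) :=
    (Real.le_sqrt hsum0 (le_trans (sq_nonneg _) hkey)).mpr hkey
  -- r ∈ A and r in causal past of m
  have hAr : r ∈ A := by
    have hpA : rp ∈ A := by
      have := hrp.1; rw [← hclosed.closure_eq]; exact frontier_subset_closure this
    have hqA : rq ∈ A := by
      have := hrq.1; rw [← hclosed.closure_eq]; exact frontier_subset_closure this
    exact hconv hpA hqA ht0 (by linarith) (by ring)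
  have hrcp : InCausalPast r m := by
    constructor
    · rw [show r - m = -(m - r) by abel, hneg, hcomb]
      nlinarith [hcs, hTu0, hTv0, mul_nonneg hTu0 hTv0,
        mul_nonneg ht0 (sub_nonneg.mpr ht1),
        mul_nonneg (mul_nonneg ht0 (by linarith : (0:ℝ) ≤ 1 - t))
          (sub_nonneg.mpr hcs)]
    · rw [show r - m = -(m - r) by abel, hmr]
      simp only [Pi.neg_apply, Pi.add_apply, Pi.smul_apply, smul_eq_mul]
      nlinarith
  have step2 := hrm.2.2 r hAr hrcp
  calc t * Tu + (1 - t) * Tv ≤ Real.sqrt (-(mink (m - r) (m - r))) := step1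
    _ ≤ Real.sqrt (-(mink (m - rm) (m - rm))) := step2
end

section
/- Let F̃ be a complete spacelike C¹ hypersurface in M^{n+1}, p ∉ D(F̃) its domain of dependence, and v a future-directed null vector such that the line p + ℝv does not meet F̃. Then the entire null hyperplane P = p + v^⊥ does not meet F̃. -/
open Filter

/-- A future-directed null vector. -/
def NullFuture {n : ℕ} (v : Fin (n+1) → ℝ) : Prop :=
  mink v v = 0 ∧ v ≠ 0 ∧ 0 < v 0

/-- The horizontal part of a point of `M^{n+1}`, as a Euclidean vector. -/
def horizE {n : ℕ} (x : Fin (n+1) → ℝ) : EuclideanSpace ℝ (Fin n) :=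
  WithLp.toLp 2 (fun i : Fin n => x i.succ)

/-!
Write `F̃` as the graph of `h` over the horizontal space and let `e` be the unit horizontal
direction of `v`. The null line is then `τ ↦ (p' + τ e, p₀ + τ)` and the null hyperplane
`{(y, s) | s = p₀ + ⟪y - p', e⟫}`. Since `‖∇h‖ < 1`, `h` is `1`-Lipschitz and
`h (x + e) < h x + 1`. So if the graph meets the hyperplane at `x`, comparing with `x + e`
puts the graph strictly below the hyperplane far out along the line, because the segment
from `x + e` to `p' + τ e` becomes parallel to `e` as `τ → ∞`. The same argument for `-h`
and `-e` puts the graph above the line far out in the other direction, and the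
intermediate value theorem gives a point of the line on the graph.
-/

open RealInnerProductSpace

theorem sub_lt_norm_of_norm_fderiv_lt_one {E : Type*} [NormedAddCommGroup E]
    [NormedSpace ℝ E] {f : E → ℝ} (hf : Differentiable ℝ f) (hf' : ∀ y, ‖fderiv ℝ f y‖ < 1)
    (y : E) {e : E} (he : e ≠ 0) : f (y + e) - f y < ‖e‖ := by
  have hderiv : ∀ t : ℝ, HasDerivAt (fun t : ℝ => f (y + t • e) - t * ‖e‖)
      (fderiv ℝ f (y + t • e) e - ‖e‖) t := by
    intro t
    have hline : HasDerivAt (fun t : ℝ => y + t • e) e t := by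
      simpa using ((hasDerivAt_id t).smul_const e).const_add y
    exact ((hf _).hasFDerivAt.comp_hasDerivAt t hline).sub (hasDerivAt_mul_const ‖e‖)
  have hneg : ∀ t : ℝ, fderiv ℝ f (y + t • e) e - ‖e‖ < 0 := by
    intro t
    have hbound := (le_abs_self _).trans ((fderiv ℝ f (y + t • e)).le_opNorm e)
    nlinarith [hf' (y + t • e), norm_pos_iff.mpr he]
  have hanti := strictAnti_of_hasDerivAt_neg hderiv hneg zero_lt_one
  simp only [zero_smul, add_zero, zero_mul, sub_zero, one_smul, one_mul] at hanti
  linarith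

section InnerProductSpace

variable {E : Type*} [NormedAddCommGroup E] [InnerProductSpace ℝ E]

theorem exists_norm_add_smul_lt_inner_add {e : E} (he : ‖e‖ = 1) (q : E) {m : ℝ}
    (hm : 0 < m) : ∃ τ : ℝ, ‖q + τ • e‖ < ⟪q + τ • e, e⟫ + m := by
  refine ⟨‖q‖ ^ 2 / (2 * m) - ⟪q, e⟫, ?_⟩
  set τ := ‖q‖ ^ 2 / (2 * m) - ⟪q, e⟫
  have hinner : ⟪q + τ • e, e⟫ = ‖q‖ ^ 2 / (2 * m) := by
    rw [inner_add_left, real_inner_smul_left, real_inner_self_eq_norm_sq, he]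
    ring
  have hnorm : ‖q + τ • e‖ ^ 2 = ‖q‖ ^ 2 + 2 * τ * ⟪q, e⟫ + τ ^ 2 := by
    rw [norm_add_sq_real, real_inner_smul_right, norm_smul, he, Real.norm_eq_abs, mul_one,
      sq_abs]
    ring
  rw [hinner]
  refine lt_of_pow_lt_pow_left₀ 2 (by positivity) ?_
  have hτ : τ + ⟪q, e⟫ = ‖q‖ ^ 2 / (2 * m) := by ring
  have hm' : ‖q‖ ^ 2 / (2 * m) * m = ‖q‖ ^ 2 / 2 := by field_simp
  nlinarith [sq_nonneg ⟪q, e⟫]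

theorem exists_apply_lt_add_inner {f : E → ℝ} (hf : Differentiable ℝ f)
    (hf' : ∀ y, ‖fderiv ℝ f y‖ < 1) {e : E} (he : ‖e‖ = 1) (x p : E) :
    ∃ τ : ℝ, f (p + τ • e) < f x + ⟪p + τ • e - x, e⟫ := by
  have hlip : LipschitzWith 1 f :=
    lipschitzWith_of_nnnorm_fderiv_le hf fun y => (hf' y).le
  have hstep := sub_lt_norm_of_norm_fderiv_lt_one hf hf' x (e := e) (by rintro rfl; simp at he)
  rw [he] at hstep
  obtain ⟨τ, hτ⟩ := exists_norm_add_smul_lt_inner_add he (p - (x + e)) (sub_pos.mpr hstep)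
  refine ⟨τ, ?_⟩
  have hdist := hlip.dist_le_mul (p + τ • e) (x + e)
  rw [NNReal.coe_one, one_mul, Real.dist_eq, dist_eq_norm] at hdist
  have hq : p + τ • e - (x + e) = p - (x + e) + τ • e := by abel
  have hinner : ⟪p + τ • e - x, e⟫ = ⟪p - (x + e) + τ • e, e⟫ + 1 := by
    have hee : ⟪e, e⟫ = 1 := by rw [real_inner_self_eq_norm_sq, he, one_pow]
    rw [← hee, ← inner_add_left, ← hq]
    congr 1; abel
  rw [hq] at hdist
  rw [hinner]
  linarith [le_abs_self (f (p + τ • e) - f (x + e))]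

theorem exists_apply_add_smul_eq_of_apply_eq_add_inner {f : E → ℝ} (hf : Differentiable ℝ f)
    (hf' : ∀ y, ‖fderiv ℝ f y‖ < 1) {e : E} (he : ‖e‖ = 1) {x p : E} {a : ℝ}
    (hx : f x = a + ⟪x - p, e⟫) : ∃ τ : ℝ, f (p + τ • e) = a + τ := by
  have hinner : ∀ τ : ℝ, ⟪p + τ • e - x, e⟫ = τ - ⟪x - p, e⟫ := fun τ => by
    rw [show p + τ • e - x = τ • e - (x - p) by abel, inner_sub_left, real_inner_smul_left,
      real_inner_self_eq_norm_sq, he]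
    ring
  obtain ⟨τ₁, hbelow⟩ := exists_apply_lt_add_inner hf hf' he x p
  obtain ⟨τ₂, habove⟩ := exists_apply_lt_add_inner hf.neg (by simpa [fderiv_neg] using hf')
    (by rwa [norm_neg]) x p
  rw [hinner, hx] at hbelow
  rw [smul_neg, ← neg_smul, inner_neg_right, hinner, Pi.neg_apply, Pi.neg_apply, hx] at habove
  have hcont : Continuous fun τ : ℝ => f (p + τ • e) - (a + τ) := by
    have := hf.continuous
    fun_prop
  obtain ⟨τ, hτ⟩ := intermediate_value_univ τ₁ (-τ₂) hcont
    (show (0 : ℝ) ∈ Set.Icc _ _ from ⟨by linarith, by linarith⟩)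
  exact ⟨τ, sub_eq_zero.mp hτ⟩

end InnerProductSpace

theorem horizE_add {n : ℕ} (x y : Fin (n+1) → ℝ) : horizE (x + y) = horizE x + horizE y := rfl

theorem horizE_sub {n : ℕ} (x y : Fin (n+1) → ℝ) : horizE (x - y) = horizE x - horizE y := rfl

theorem horizE_smul {n : ℕ} (t : ℝ) (x : Fin (n+1) → ℝ) : horizE (t • x) = t • horizE x := rfl

theorem mink_eq_inner_horizE {n : ℕ} (w u : Fin (n+1) → ℝ) :
    mink w u = ⟪horizE w, horizE u⟫ - w 0 * u 0 := by
  simp only [mink, horizE, PiLp.inner_apply, RCLike.inner_apply, conj_trivial,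
    Fin.sum_univ_succ]
  simp only [mul_comm]
  ring

theorem null_plane_misses_spacelike_hypersurface_general {n : ℕ}
    (h : EuclideanSpace ℝ (Fin n) → ℝ) (hC1 : ContDiff ℝ 1 h)
    (hgrad : ∀ y : EuclideanSpace ℝ (Fin n), ‖gradient h y‖ < 1)
    (F : Set (Fin (n+1) → ℝ)) (hF : F = {x | x 0 = h (horizE x)})
    (p v : Fin (n+1) → ℝ) (hv : NullFuture v)
    (hline : ∀ t : ℝ, p + t • v ∉ F) :
    ∀ x ∈ F, mink (x - p) v ≠ 0 := by
  subst hF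
  obtain ⟨hnull, -, hv0⟩ := hv
  rintro x (hx : x 0 = h (horizE x)) hmink
  rw [mink_eq_inner_horizE] at hnull hmink
  set e := (v 0)⁻¹ • horizE v
  have he : ‖e‖ = 1 := by
    refine (pow_eq_one_iff_of_nonneg (norm_nonneg e) two_ne_zero).mp ?_
    rw [← real_inner_self_eq_norm_sq, real_inner_smul_left, real_inner_smul_right]
    field_simp
    linarith
  have hfderiv : ∀ y, ‖fderiv ℝ h y‖ < 1 := fun y => by
    rw [← toDual_gradient, LinearIsometryEquiv.norm_map]; exact hgrad y
  obtain ⟨τ, hτ⟩ := exists_apply_add_smul_eq_of_apply_eq_add_inner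
    (hC1.differentiable one_ne_zero) hfderiv he (x := horizE x) (p := horizE p) (a := p 0) (by
      rw [real_inner_smul_right, ← horizE_sub]
      field_simp
      simp only [Pi.sub_apply] at hmink
      rw [← hx]
      linarith)
  apply hline (τ / v 0)
  have hpoint : horizE (p + (τ / v 0) • v) = horizE p + τ • e := by
    rw [horizE_add, horizE_smul, smul_smul, div_eq_mul_inv]
  show _ = h _
  rw [hpoint, hτ, Pi.add_apply, Pi.smul_apply, smul_eq_mul]
  field_simp

/-- Let `F̃` be a complete spacelike `C¹` hypersurface in `M^{n+1}` (realized, as every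
such hypersurface is, as the graph of a `C¹` function `h` with `‖∇h‖ < 1`, complete in
the sense that curves going to infinity have infinite induced length).  If `p` is a point
and `v` a future-directed null vector such that the line `p + ℝv` does not meet `F̃`
(so that in particular `p ∉ D(F̃)`), then the entire null hyperplane `P = p + v^⊥` does
not meet `F̃`. -/
theorem null_plane_misses_spacelike_hypersurface {n : ℕ}
    (h : EuclideanSpace ℝ (Fin n) → ℝ) (hC1 : ContDiff ℝ 1 h)
    (hgrad : ∀ y : EuclideanSpace ℝ (Fin n), ‖gradient h y‖ < 1)
    -- completeness of the induced Riemannian metric on the graph: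
    -- divergent C¹ curves have infinite induced length
    (hcomplete : ∀ u : ℝ → EuclideanSpace ℝ (Fin n), ContDiff ℝ 1 u →
      Tendsto (fun t => ‖u t‖) atTop atTop →
      Tendsto (fun T : ℝ => ∫ t in (0:ℝ)..T,
        Real.sqrt (‖deriv u t‖ ^ 2 - (deriv (fun s => h (u s)) t) ^ 2)) atTop atTop)
    (F : Set (Fin (n+1) → ℝ)) (hF : F = {x | x 0 = h (horizE x)})
    (p v : Fin (n+1) → ℝ) (hv : NullFuture v)
    (hline : ∀ t : ℝ, p + t • v ∉ F) :
    ∀ x ∈ F, mink (x - p) v ≠ 0 :=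
  null_plane_misses_spacelike_hypersurface_general h hC1 hgrad F hF p v hv hline
end

section
/- Let Ω be a future-complete regular domain in M^{n+1} with cosmological time T, retraction r onto the singularity Σ = r(Ω), and normal field N(p) = (p - r(p))/T(p) ∈ H^n. Then for all p, q ∈ Ω: ⟨T(p)N(p) - T(q)N(q), r(p) - r(q)⟩ ≥ 0. -/
/-- A future-complete regular domain: a nonempty open convex set that is the intersection
of the (open) futures of a family of null hyperplanes containing at least two
non-parallel ones. -/
def IsRegularDomain {n : ℕ} (Ω : Set (Fin (n+1) → ℝ)) : Prop :=
  IsOpen Ω ∧ Ω.Nonempty ∧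
  ∃ Λ : Set ((Fin (n+1) → ℝ) × (Fin (n+1) → ℝ)),
    (∀ l ∈ Λ, NullFuture l.2) ∧
    (∃ l₁ ∈ Λ, ∃ l₂ ∈ Λ, ∀ s : ℝ, l₂.2 ≠ s • l₁.2) ∧
    Ω = {x | ∀ l ∈ Λ, mink (x - l.1) l.2 < 0}

lemma mink_sub_left_s12 {n : ℕ} (u v w : Fin (n+1) → ℝ) :
    mink (u - v) w = mink u w - mink v w := by
  unfold mink
  simp only [Pi.sub_apply, sub_mul, Finset.sum_sub_distrib]
  ring

lemma mink_neg_right {n : ℕ} (u v : Fin (n+1) → ℝ) : mink u (-v) = - mink u v := by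
  unfold mink
  simp only [Pi.neg_apply, mul_neg, Finset.sum_neg_distrib]
  ring

/-- The fundamental inequality for a future-complete regular domain `Ω` with cosmological
time `T`, retraction `r` onto the singularity in the past, and normal field
`N(p) = (p - r(p))/T(p)`:  for all `p, q ∈ Ω`,
`⟨T(p)N(p) - T(q)N(q), r(p) - r(q)⟩ ≥ 0`.  (Here `T(p)N(p) = p - r(p)`; the retraction
point `r(p) ∈ ∂Ω` is characterized by `p - r(p)` being future timelike with
`r(p) + (p - r(p))^⊥` a support plane of `Ω`.) -/
theorem fundamental_inequality_regular_domain {n : ℕ}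
    (Ω : Set (Fin (n+1) → ℝ)) (hΩ : IsRegularDomain Ω)
    (p q : Fin (n+1) → ℝ) (hp : p ∈ Ω) (hq : q ∈ Ω)
    (rp rq : Fin (n+1) → ℝ) (hrp : rp ∈ frontier Ω) (hrq : rq ∈ frontier Ω)
    (hpt : TimelikeFuture (p - rp)) (hqt : TimelikeFuture (q - rq))
    (hsp : ∀ x ∈ closure Ω, mink (x - rp) (p - rp) ≤ 0)
    (hsq : ∀ x ∈ closure Ω, mink (x - rq) (q - rq) ≤ 0) :
    0 ≤ mink ((p - rp) - (q - rq)) (rp - rq) := by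
  have h1 := hsp rq (frontier_subset_closure hrq)
  have h2 := hsq rp (frontier_subset_closure hrp)
  have e1 : - mink (rq - rp) (p - rp) = mink (p - rp) (rp - rq) := by
    have h : (rq - rp : Fin (n+1) → ℝ) = -(rp - rq) := by abel
    rw [h, mink_comm, mink_neg_right, neg_neg]
  have e2 : mink (q - rq) (rp - rq) = mink (rp - rq) (q - rq) := mink_comm _ _
  rw [mink_sub_left_s12, ← e1, e2]
  linarith
end

section
/- Let Ω be a future-complete regular domain in M^{n+1}, p ∈ ∂Ω, and suppose a ray p + ℝ₊v with v a future-directed null vector is contained in ∂Ω. Then the null hyperplane p + v^⊥ is a support plane of Ω. Conversely, if p + v^⊥ is a null support plane at p ∈ ∂Ω then the ray p + ℝ₊v lies in ∂Ω. -/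
lemma mink_add_left {n : ℕ} (u y w : Fin (n+1) → ℝ) :
    mink (u + y) w = mink u w + mink y w := by
  simp only [mink, Pi.add_apply, add_mul, Finset.sum_add_distrib]
  ring

lemma mink_smul_left {n : ℕ} (t : ℝ) (u w : Fin (n+1) → ℝ) :
    mink (t • u) w = t * mink u w := by
  simp only [mink, Pi.smul_apply, smul_eq_mul, mul_assoc, ← Finset.mul_sum]
  ring

lemma mink_add_right {n : ℕ} (w u y : Fin (n+1) → ℝ) :
    mink w (u + y) = mink w u + mink w y := by
  rw [mink_comm w (u + y), mink_add_left, mink_comm u w, mink_comm y w]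

lemma mink_smul_right {n : ℕ} (t : ℝ) (w u : Fin (n+1) → ℝ) :
    mink w (t • u) = t * mink w u := by
  rw [mink_comm w (t • u), mink_smul_left, mink_comm u w]

lemma mink_neg_left {n : ℕ} (u w : Fin (n+1) → ℝ) :
    mink (-u) w = -mink u w := by
  rw [show (-u) = (-1 : ℝ) • u by simp, mink_smul_left]; ring

/-- reversed Cauchy-Schwarz for causal vectors -/
lemma mink_cs {n : ℕ} {v w : Fin (n+1) → ℝ} (hv0 : 0 ≤ v 0) (hw0 : 0 ≤ w 0)
    (hv : mink v v ≤ 0) (hw : mink w w ≤ 0) : mink v w ≤ 0 := by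
  have key : ∀ (a b : Fin (n+1) → ℝ), mink a b
      = (∑ i : Fin n, a i.succ * b i.succ) - a 0 * b 0 := by
    intro a b
    simp only [mink, Fin.sum_univ_succ]
    ring
  rw [key] at hv hw ⊢
  have hcs := Finset.sum_mul_sq_le_sq_mul_sq Finset.univ
    (fun i : Fin n => v i.succ) (fun i : Fin n => w i.succ)
  have h1 : ∑ i : Fin n, v i.succ ^ 2 ≤ v 0 * v 0 := by
    have : ∑ i : Fin n, v i.succ * v i.succ ≤ v 0 * v 0 := by linarith
    simpa [sq] using this
  have h2 : ∑ i : Fin n, w i.succ ^ 2 ≤ w 0 * w 0 := by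
    have : ∑ i : Fin n, w i.succ * w i.succ ≤ w 0 * w 0 := by linarith
    simpa [sq] using this
  have hsum1 : (0:ℝ) ≤ ∑ i : Fin n, v i.succ ^ 2 :=
    Finset.sum_nonneg fun i _ => sq_nonneg _
  have hsum2 : (0:ℝ) ≤ ∑ i : Fin n, w i.succ ^ 2 :=
    Finset.sum_nonneg fun i _ => sq_nonneg _
  nlinarith [hcs, sq_nonneg ((∑ i : Fin n, v i.succ * w i.succ) - v 0 * w 0),
    sq_nonneg ((∑ i : Fin n, v i.succ * w i.succ) + v 0 * w 0), mul_nonneg hv0 hw0]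

/-- A regular domain absorbs future causal vectors. -/
lemma mink_cone {n : ℕ} {Λ : Set ((Fin (n+1) → ℝ) × (Fin (n+1) → ℝ))}
    (hΛ : ∀ l ∈ Λ, NullFuture l.2)
    {x y : Fin (n+1) → ℝ} (hx : ∀ l ∈ Λ, mink (x - l.1) l.2 < 0)
    (hy0 : 0 ≤ y 0) (hyy : mink y y ≤ 0) :
    ∀ l ∈ Λ, mink (x + y - l.1) l.2 < 0 := by
  intro l hl
  have h := hx l hl
  have hnull := hΛ l hl
  have hcs : mink y l.2 ≤ 0 := mink_cs hy0 (le_of_lt hnull.2.2) hyy (le_of_eq hnull.1)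
  have he : x + y - l.1 = (x - l.1) + y := by ring
  rw [he, mink_add_left]
  linarith

/-- Null rays in the boundary versus null support planes: for a future-complete regular
domain `Ω`, a point `p ∈ ∂Ω` and a future-directed null vector `v`, the ray `p + ℝ₊v` is
contained in `∂Ω` if and only if the null hyperplane `p + v^⊥` is a support plane of
`Ω` (with `Ω` in its future side). -/
theorem null_ray_in_boundary_iff_null_support_plane {n : ℕ}
    (Ω : Set (Fin (n+1) → ℝ)) (hΩ : IsRegularDomain Ω)
    (p : Fin (n+1) → ℝ) (hp : p ∈ frontier Ω)
    (v : Fin (n+1) → ℝ) (hv : NullFuture v) :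
    (∀ t : ℝ, 0 ≤ t → p + t • v ∈ frontier Ω) ↔ (∀ x ∈ Ω, mink (x - p) v ≤ 0) := by
  obtain ⟨hopen, -, Λ, hΛnull, -, hΩeq⟩ := hΩ
  have hmem : ∀ x, x ∈ Ω ↔ ∀ l ∈ Λ, mink (x - l.1) l.2 < 0 := by
    intro x; rw [hΩeq]; rfl
  have hv0 := hv.2.2
  have hvv := hv.1
  constructor
  · -- ray in boundary → support plane
    intro hray x hx
    by_contra hpos
    push_neg at hpos
    set c : ℝ := mink (x - p) v with hc
    have hmc : mink (p - x) v = -c := by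
      rw [show p - x = -(x - p) by ring, mink_neg_left]
    set q : ℝ := mink (p - x) (p - x) with hq
    set t : ℝ := max 0 (max (q / (2 * c)) ((x 0 - p 0) / v 0)) + 1 with ht
    have ht0 : 0 ≤ t := by
      have := le_max_left (0:ℝ) (max (q / (2 * c)) ((x 0 - p 0) / v 0))
      simp only [ht]; linarith
    have h1 : q / (2 * c) < t := by
      have h1a := le_max_left (q / (2 * c)) ((x 0 - p 0) / v 0)
      have h1b := le_max_right (0:ℝ) (max (q / (2 * c)) ((x 0 - p 0) / v 0))
      simp only [ht]; linarith
    have h2 : (x 0 - p 0) / v 0 < t := by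
      have h1a := le_max_right (q / (2 * c)) ((x 0 - p 0) / v 0)
      have h1b := le_max_right (0:ℝ) (max (q / (2 * c)) ((x 0 - p 0) / v 0))
      simp only [ht]; linarith
    have h1' : q < t * (2 * c) := (div_lt_iff₀ (by positivity)).mp h1
    have h2' : x 0 - p 0 < t * v 0 := (div_lt_iff₀ hv0).mp h2
    set y : Fin (n+1) → ℝ := (p - x) + t • v with hy
    have hy0 : 0 ≤ y 0 := by
      simp only [hy, Pi.add_apply, Pi.sub_apply, Pi.smul_apply, smul_eq_mul]
      linarith
    have hyy : mink y y ≤ 0 := by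
      have e1 : mink y y = q - 2 * t * c + t * t * mink v v := by
        simp only [hy, mink_add_left, mink_add_right, mink_smul_left, mink_smul_right, ← hq]
        rw [mink_comm v (p - x), hmc]
        ring
      rw [e1, hvv]
      nlinarith
    have hin : p + t • v ∈ Ω := by
      rw [hmem]
      have : x + y = p + t • v := by rw [hy]; ring
      rw [← this]
      exact mink_cone hΛnull (fun l hl => (hmem x).mp hx l hl) hy0 hyy
    have hfr := hray t ht0
    rw [hopen.frontier_eq] at hfr
    exact hfr.2 hin
  · -- support plane → ray in boundary
    intro hsupp t ht0
    rw [hopen.frontier_eq]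
    constructor
    · -- closure
      have hpc : p ∈ closure Ω := frontier_subset_closure hp
      have hcont : Continuous (fun z : Fin (n+1) → ℝ => z + t • v) := by continuity
      have himg : (fun z : Fin (n+1) → ℝ => z + t • v) '' Ω ⊆ Ω := by
        rintro _ ⟨z, hz, rfl⟩
        rw [hmem]
        have h0 : 0 ≤ (t • v) 0 := by
          simp only [Pi.smul_apply, smul_eq_mul]; positivity
        have hnn : mink (t • v) (t • v) ≤ 0 := by
          rw [mink_smul_left, mink_comm, mink_smul_left, hvv]; simp
        exact mink_cone hΛnull (fun l hl => (hmem z).mp hz l hl) h0 hnn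
      have := image_closure_subset_closure_image (s := Ω) hcont
        (Set.mem_image_of_mem _ hpc)
      exact closure_mono himg this
    · -- not in Ω
      intro hq
      rw [Metric.isOpen_iff] at hopen
      obtain ⟨r, hr, hball⟩ := hopen _ hq
      set w : Fin (n+1) → ℝ := fun i => if i = 0 then (-1) else 0 with hw
      have hwnorm : ‖w‖ ≤ 1 := by
        rw [pi_norm_le_iff_of_nonneg zero_le_one]
        intro i
        simp only [hw]
        split <;> simp
      set ε : ℝ := r / 2 with hε
      have hε0 : 0 < ε := by positivity
      have hmemball : (p + t • v) + ε • w ∈ Metric.ball (p + t • v) r := by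
        rw [Metric.mem_ball, dist_eq_norm]
        have : (p + t • v) + ε • w - (p + t • v) = ε • w := by ring
        rw [this, norm_smul]
        calc ‖ε‖ * ‖w‖ ≤ ε * 1 := by
              apply mul_le_mul _ hwnorm (norm_nonneg _) (le_of_lt hε0)
              rw [Real.norm_eq_abs, abs_of_pos hε0]
            _ < r := by linarith
      have hxin : (p + t • v) + ε • w ∈ Ω := hball hmemball
      have := hsupp _ hxin
      have hwv : mink w v = v 0 := by
        simp only [mink, hw]
        rw [Finset.sum_congr rfl (fun i _ => by
          show (if i = 0 then (-1:ℝ) else 0) * v i = if i = 0 then -v i else 0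
          split <;> ring)]
        rw [Finset.sum_ite_eq' Finset.univ (0 : Fin (n+1)) (fun i => -v i)]
        simp
        ring
      have hdiff : (p + t • v) + ε • w - p = t • v + ε • w := by ring
      rw [hdiff, mink_add_left, mink_smul_left, mink_smul_left, hvv, hwv] at this
      nlinarith
end

section
/- Let φ : ℝⁿ → ℝ be a C² convex function with ‖∇φ(x)‖ < 1 for all x, whose graph S = {(φ(x), x)} ⊂ M^{n+1} is a complete Riemannian manifold in the induced metric, and suppose 0 is a minimum point of φ. If c(t) = (φ(x(t)), x(t)) is a geodesic of S with x(0) = 0, then t ↦ ‖x(t)‖² is a non-decreasing function (‖·‖ the Euclidean norm on ℝⁿ). -/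
/-!
Along the curve, `g(t) = ⟪x, ẋ⟫ = ½ (d/dt)‖x‖²` has derivative `⟪x, ẍ⟫ + ‖ẋ‖²`. By the geodesic
equation `⟪x, ẍ⟫` is a nonnegative multiple of `⟪x, ∇φ(x)⟫`: the coefficient is a Hessian
quadratic form of the convex `φ` divided by a power of `1 - ‖∇φ‖² > 0`, and
`⟪x, ∇φ(x)⟫ ≥ φ(x) - φ(0) ≥ 0` by the gradient inequality. Hence `g` is nondecreasing, and since
`g(0) = 0` it is nonnegative for `t ≥ 0`.
-/

open Set InnerProductSpace

section Convex

variable {E : Type*} [NormedAddCommGroup E] [InnerProductSpace ℝ E] {φ : E → ℝ}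

lemma ConvexOn.comp_line (hφ : ConvexOn ℝ univ φ) (p v : E) :
    ConvexOn ℝ univ fun s : ℝ => φ (p + s • v) := by
  have hline : (fun s : ℝ => φ (p + s • v)) = φ ∘ AffineMap.lineMap p (p + v) := by
    ext s
    simp [AffineMap.lineMap_apply, add_comm]
  rw [hline]
  simpa using hφ.comp_affineMap (AffineMap.lineMap p (p + v))

lemma hasDerivAt_add_smul_const (p v : E) (s : ℝ) :
    HasDerivAt (fun s : ℝ => p + s • v) v s := by
  simpa using ((hasDerivAt_id s).smul_const v).const_add p

variable [CompleteSpace E]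

lemma hasDerivAt_comp_line {p v : E} {s : ℝ} (hφ : DifferentiableAt ℝ φ (p + s • v)) :
    HasDerivAt (fun s : ℝ => φ (p + s • v)) ⟪gradient φ (p + s • v), v⟫_ℝ s :=
  (hφ.hasFDerivAt.comp_hasDerivAt s (hasDerivAt_add_smul_const p v s)).congr_deriv
    inner_gradient_left.symm

lemma ConvexOn.sub_le_inner_gradient (hφ : ConvexOn ℝ univ φ) {p : E}
    (hp : DifferentiableAt ℝ φ p) (q : E) :
    φ p - φ q ≤ ⟪gradient φ p, p - q⟫_ℝ := by
  have hder := hasDerivAt_comp_line (p := q) (v := p - q) (s := 1) (by simpa using hp)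
  simpa [slope_def_field] using
    (hφ.comp_line q (p - q)).slope_le_of_hasDerivAt (mem_univ 0) (mem_univ 1) one_pos hder

lemma ConvexOn.inner_sub_gradient_nonneg (hφ : ConvexOn ℝ univ φ) {q : E}
    (hq : ∀ y, φ q ≤ φ y) (p : E) :
    0 ≤ ⟪p - q, gradient φ p⟫_ℝ := by
  by_cases hp : DifferentiableAt ℝ φ p
  · rw [real_inner_comm]
    linarith [hφ.sub_le_inner_gradient hp q, hq p]
  · simp [gradient_eq_zero_of_not_differentiableAt hp]

lemma ConvexOn.inner_fderiv_gradient_nonneg (hφ : ConvexOn ℝ univ φ)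
    (hdiff : Differentiable ℝ φ) (p v : E) :
    0 ≤ ⟪v, fderiv ℝ (gradient φ) p v⟫_ℝ := by
  by_cases hg : DifferentiableAt ℝ (gradient φ) p
  · set k : ℝ → ℝ := fun s => ⟪gradient φ (p + s • v), v⟫_ℝ
    have hk : ∀ s, HasDerivAt (fun s : ℝ => φ (p + s • v)) (k s) s :=
      fun s => hasDerivAt_comp_line (hdiff _)
    have hk_mono : Monotone k := by
      intro a b hab
      rw [← (hk a).deriv, ← (hk b).deriv]
      exact (hφ.comp_line p v).monotoneOn_deriv (fun s _ => (hk s).differentiableAt)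
        (mem_univ a) (mem_univ b) hab
    have hk_deriv : HasDerivAt k ⟪fderiv ℝ (gradient φ) p v, v⟫_ℝ 0 := by
      have h := (hg.hasFDerivAt.comp_hasDerivAt_of_eq 0 (hasDerivAt_add_smul_const p v 0)
        (by simp)).inner ℝ (hasDerivAt_const (0 : ℝ) v)
      rwa [inner_zero_right, zero_add] at h
    rw [real_inner_comm, ← hk_deriv.deriv]
    exact hk_mono.deriv_nonneg
  · simp [fderiv_zero_of_not_differentiableAt hg]

end Convex

section Curves

variable {E : Type*} [NormedAddCommGroup E] [InnerProductSpace ℝ E]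
  {x x' x'' : ℝ → E}

lemma monotoneOn_norm_sq_of_inner_deriv_nonneg (hx' : ∀ t, HasDerivAt x (x' t) t)
    (hpos : ∀ t, 0 ≤ t → 0 ≤ ⟪x t, x' t⟫_ℝ) :
    MonotoneOn (fun t => ‖x t‖ ^ 2) (Ici 0) := by
  have hd : ∀ t, HasDerivAt (fun t => ‖x t‖ ^ 2) (2 * ⟪x t, x' t⟫_ℝ) t := fun t => by
    simpa using (hx' t).norm_sq
  refine monotoneOn_of_deriv_nonneg (convex_Ici 0)
    (fun t _ => (hd t).continuousAt.continuousWithinAt)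
    (fun t _ => (hd t).differentiableAt.differentiableWithinAt) fun t ht => ?_
  rw [interior_Ici] at ht
  rw [(hd t).deriv]
  have := hpos t ht.le
  positivity

lemma monotoneOn_norm_sq_of_inner_acc_nonneg (hx' : ∀ t, HasDerivAt x (x' t) t)
    (hx'' : ∀ t, HasDerivAt x' (x'' t) t) (hx0 : x 0 = 0)
    (hacc : ∀ t, 0 ≤ ⟪x t, x'' t⟫_ℝ) :
    MonotoneOn (fun t => ‖x t‖ ^ 2) (Ici 0) := by
  have hd : ∀ t, HasDerivAt (fun t => ⟪x t, x' t⟫_ℝ) (⟪x t, x'' t⟫_ℝ + ⟪x' t, x' t⟫_ℝ) t :=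
    fun t => (hx' t).inner ℝ (hx'' t)
  have hmono : Monotone fun t => ⟪x t, x' t⟫_ℝ :=
    monotone_of_hasDerivAt_nonneg hd fun t => add_nonneg (hacc t) real_inner_self_nonneg
  refine monotoneOn_norm_sq_of_inner_deriv_nonneg hx' fun t ht => ?_
  simpa [hx0] using hmono ht

end Curves

/-- Let `φ : ℝⁿ → ℝ` be a `C²` convex function with `‖∇φ‖ < 1` everywhere, whose graph
`S = {(φ(x), x)} ⊂ M^{n+1}` is a spacelike surface, with minimum point `0`.  If
`c(t) = (φ(x(t)), x(t))` is a geodesic of `S` with `x(0) = 0` — i.e. the horizontal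
component satisfies the geodesic equation
`ẍ = [ẋᵀ(Hφ)ẋ / (1 - ‖∇φ‖²)^{3/2}]·∇φ` — then `t ↦ ‖x(t)‖²` is non-decreasing
(for `t ≥ 0`). -/
theorem geodesic_on_convex_graph_moves_outward {n : ℕ}
    (φ : EuclideanSpace ℝ (Fin n) → ℝ)
    (hφ : ContDiff ℝ 2 φ) (hconv : ConvexOn ℝ Set.univ φ)
    (hgrad : ∀ y, ‖gradient φ y‖ < 1)
    (hmin : ∀ y, φ 0 ≤ φ y)
    (x x' x'' : ℝ → EuclideanSpace ℝ (Fin n))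
    (hx' : ∀ t, HasDerivAt x (x' t) t)
    (hx'' : ∀ t, HasDerivAt x' (x'' t) t)
    (hgeo : ∀ t, x'' t =
      ((inner ℝ (x' t) ((fderiv ℝ (gradient φ) (x t)) (x' t)) : ℝ) /
          (1 - ‖gradient φ (x t)‖ ^ 2) ^ ((3:ℝ)/2)) • gradient φ (x t))
    (hx0 : x 0 = 0) :
    MonotoneOn (fun t => ‖x t‖ ^ 2) (Set.Ici (0:ℝ)) := by
  refine monotoneOn_norm_sq_of_inner_acc_nonneg hx' hx'' hx0 fun t => ?_
  have hhess := hconv.inner_fderiv_gradient_nonneg (hφ.differentiable (by norm_num)) (x t) (x' t)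
  have hradial : 0 ≤ ⟪x t, gradient φ (x t)⟫_ℝ := by
    simpa using hconv.inner_sub_gradient_nonneg hmin (x t)
  have hdenom : 0 ≤ 1 - ‖gradient φ (x t)‖ ^ 2 := by
    nlinarith [hgrad (x t), norm_nonneg (gradient φ (x t))]
  rw [hgeo t, real_inner_smul_right]
  exact mul_nonneg (div_nonneg hhess (Real.rpow_nonneg hdenom _)) hradial
end
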